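/- Let G be a Hopf *-algebra over ℂ, A a unital *-algebra over ℂ, Φ : A → A ⊗ G a unital algebra homomorphism which is a star-preserving corepresentation of G on A (whenever Φ(a) = Σᵢ aᵢ ⊗ gᵢ then Φ(a*) = Σᵢ aᵢ* ⊗ star(gᵢ)), and ℳ := {p ∈ A : Φ(p) = p ⊗ 1}. Let α be a corepresentation of G on an n-dimensional ℂ-vector space V with basis e₁,…,eₙ and matrix coefficients u_{ij} ∈ G defined by α(e_j) = Σᵢ e_i ⊗ u_{ij}, and assume α is unitary in the sense that Σ_{k=1}^n u_{ik}·star(u_{jk}) = δ_{ij}·1_G for all i, j. Suppose there exist T^L_1, …, T^L_d ∈ Mor⁰(α, Φ) such that, setting x_{ki} := T^L_k(e_i), one has Σ_{k=1}^d x_{ki}*·x_{kj} = δ_{ij}·1_A for all i, j. Then for every T ∈ Mor⁰(α, Φ), the elements p_k := Σ_{i=1}^n T(e_i)·x_{ki}* belong to ℳ for k = 1, …, d, and T(v) = Σ_{k=1}^d p_k·T^L_k(v) for all v ∈ V. -/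

import Mathlib

open TensorProduct

noncomputable section

/-- `ρ : V → V ⊗ G` is a corepresentation of the bialgebra `G` on the ℂ-vector space `V`:
`(id ⊗ ε) ∘ ρ` is the canonical map `v ↦ v ⊗ 1` and `(ρ ⊗ id) ∘ ρ = (id ⊗ Δ) ∘ ρ`. -/
def IsCorep {G : Type} [Ring G] [Bialgebra ℂ G]
    {V : Type} [AddCommGroup V] [Module ℂ V]
    (ρ : V →ₗ[ℂ] V ⊗[ℂ] G) : Prop :=
  (∀ v : V,
      LinearMap.lTensor V (Coalgebra.counit (R := ℂ) (A := G)) (ρ v) = v ⊗ₜ[ℂ] (1 : ℂ)) ∧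
  (∀ v : V,
      LinearMap.rTensor G ρ (ρ v) =
        (TensorProduct.assoc ℂ V G G).symm
          (LinearMap.lTensor V (Coalgebra.comul (R := ℂ) (A := G)) (ρ v)))

/-- The direct sum `α₁ ⊕ α₂ = (ι₁ ⊗ id)∘α₁∘π₁ + (ι₂ ⊗ id)∘α₂∘π₂` of two corepresentations. -/
def corepDirectSum {G : Type} [Ring G] [Bialgebra ℂ G]
    {V₁ V₂ : Type} [AddCommGroup V₁] [Module ℂ V₁] [AddCommGroup V₂] [Module ℂ V₂]
    (α₁ : V₁ →ₗ[ℂ] V₁ ⊗[ℂ] G) (α₂ : V₂ →ₗ[ℂ] V₂ ⊗[ℂ] G) :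
    (V₁ × V₂) →ₗ[ℂ] (V₁ × V₂) ⊗[ℂ] G :=
  LinearMap.rTensor G (LinearMap.inl ℂ V₁ V₂) ∘ₗ α₁ ∘ₗ LinearMap.fst ℂ V₁ V₂ +
    LinearMap.rTensor G (LinearMap.inr ℂ V₁ V₂) ∘ₗ α₂ ∘ₗ LinearMap.snd ℂ V₁ V₂

/-- The tensor product of two corepresentations: it sends `v₁ ⊗ v₂` to
`Σᵢⱼ v₁ᵢ ⊗ v₂ⱼ ⊗ (g₁ᵢ · g₂ⱼ)` where `ρₖ vₖ = Σ vₖᵢ ⊗ gₖᵢ`. -/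
def corepTensor {G : Type} [Ring G] [Bialgebra ℂ G]
    {V₁ V₂ : Type} [AddCommGroup V₁] [Module ℂ V₁] [AddCommGroup V₂] [Module ℂ V₂]
    (α₁ : V₁ →ₗ[ℂ] V₁ ⊗[ℂ] G) (α₂ : V₂ →ₗ[ℂ] V₂ ⊗[ℂ] G) :
    (V₁ ⊗[ℂ] V₂) →ₗ[ℂ] (V₁ ⊗[ℂ] V₂) ⊗[ℂ] G :=
  LinearMap.lTensor (V₁ ⊗[ℂ] V₂) (LinearMap.mul' ℂ G) ∘ₗ
    (TensorProduct.tensorTensorTensorComm ℂ V₁ G V₂ G).toLinearMap ∘ₗ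
    TensorProduct.map α₁ α₂

/-- The trivial corepresentation `v ↦ v ⊗ 1`. -/
def trivCorep (G : Type) [Ring G] [Bialgebra ℂ G]
    (V : Type) [AddCommGroup V] [Module ℂ V] : V →ₗ[ℂ] V ⊗[ℂ] G :=
  (TensorProduct.mk ℂ V G).flip 1

/-- A degree-0 morphism of corepresentations: a ℂ-linear map `f` with
`ρ₂ ∘ f = (f ⊗ id) ∘ ρ₁`. -/
def IsDeg0Mor {G : Type} [Ring G] [Bialgebra ℂ G]
    {V₁ V₂ : Type} [AddCommGroup V₁] [Module ℂ V₁] [AddCommGroup V₂] [Module ℂ V₂]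
    (ρ₁ : V₁ →ₗ[ℂ] V₁ ⊗[ℂ] G) (ρ₂ : V₂ →ₗ[ℂ] V₂ ⊗[ℂ] G) (f : V₁ →ₗ[ℂ] V₂) : Prop :=
  ∀ v : V₁, ρ₂ (f v) = LinearMap.rTensor G f (ρ₁ v)

/-- A degree-1 morphism of corepresentations: a conjugate-linear map `f` such that whenever
`ρ₁ v = Σᵢ vᵢ ⊗ gᵢ` one has `ρ₂ (f v) = Σᵢ f vᵢ ⊗ star gᵢ`. -/
def IsDeg1Mor {G : Type} [Ring G] [Bialgebra ℂ G] [StarRing G]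
    {V₁ V₂ : Type} [AddCommGroup V₁] [Module ℂ V₁] [AddCommGroup V₂] [Module ℂ V₂]
    (ρ₁ : V₁ →ₗ[ℂ] V₁ ⊗[ℂ] G) (ρ₂ : V₂ →ₗ[ℂ] V₂ ⊗[ℂ] G)
    (f : V₁ →ₛₗ[starRingEnd ℂ] V₂) : Prop :=
  ∀ (v : V₁) (s : Finset ℕ) (vs : ℕ → V₁) (gs : ℕ → G),
    ρ₁ v = ∑ i ∈ s, vs i ⊗ₜ[ℂ] gs i →
    ρ₂ (f v) = ∑ i ∈ s, f (vs i) ⊗ₜ[ℂ] star (gs i)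

/-- The compatibilities making a Hopf algebra with a conjugate-linear involutive
antimultiplicative `star` into a Hopf *-algebra: `Δ(g*) = (star ⊗ star)(Δ g)` and
`ε(g*) = conj (ε g)`. -/
def IsStarHopf (G : Type) [Ring G] [HopfAlgebra ℂ G] [StarRing G] [StarModule ℂ G] : Prop :=
  (∀ (g : G) (s : Finset ℕ) (a b : ℕ → G),
      Coalgebra.comul (R := ℂ) g = ∑ i ∈ s, a i ⊗ₜ[ℂ] b i →
      Coalgebra.comul (R := ℂ) (star g) = ∑ i ∈ s, star (a i) ⊗ₜ[ℂ] star (b i)) ∧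
  (∀ g : G, Coalgebra.counit (R := ℂ) (star g) = starRingEnd ℂ (Coalgebra.counit (R := ℂ) g))

/-- A corepresentation is irreducible if `V ≠ 0` and the only subspaces `W` with
`ρ(W)` contained in the image of `W ⊗ G → V ⊗ G` are `0` and `V`. -/
def IsIrreducibleCorep {G : Type} [Ring G] [Bialgebra ℂ G]
    {V : Type} [AddCommGroup V] [Module ℂ V]
    (ρ : V →ₗ[ℂ] V ⊗[ℂ] G) : Prop :=
  (∃ v : V, v ≠ 0) ∧
    ∀ W : Submodule ℂ V,
      (∀ w ∈ W, ρ w ∈ LinearMap.range (LinearMap.rTensor G W.subtype)) → W = ⊥ ∨ W = ⊤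

/-- `Mor⁰(α, Φ)`: ℂ-linear maps `T : V → A` with `Φ ∘ T = (T ⊗ id) ∘ α`. -/
def IsMor0 {G : Type} [Ring G] [Bialgebra ℂ G]
    {A : Type} [Ring A] [Algebra ℂ A]
    {V : Type} [AddCommGroup V] [Module ℂ V]
    (α : V →ₗ[ℂ] V ⊗[ℂ] G) (Φ : A →ₐ[ℂ] A ⊗[ℂ] G) (T : V →ₗ[ℂ] A) : Prop :=
  ∀ v : V, Φ (T v) = LinearMap.rTensor G T (α v)

/-- `Mor¹(α, Φ)`: conjugate-linear maps `S : V → A` such that whenever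
`α v = Σᵢ vᵢ ⊗ gᵢ` one has `Φ (S v) = Σᵢ S vᵢ ⊗ star gᵢ`. -/
def IsMor1 {G : Type} [Ring G] [Bialgebra ℂ G] [StarRing G]
    {A : Type} [Ring A] [Algebra ℂ A] [StarRing A]
    {V : Type} [AddCommGroup V] [Module ℂ V]
    (α : V →ₗ[ℂ] V ⊗[ℂ] G) (Φ : A →ₐ[ℂ] A ⊗[ℂ] G)
    (S : V →ₛₗ[starRingEnd ℂ] A) : Prop :=
  ∀ (v : V) (s : Finset ℕ) (vs : ℕ → V) (gs : ℕ → G),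
    α v = ∑ i ∈ s, vs i ⊗ₜ[ℂ] gs i →
    Φ (S v) = ∑ i ∈ s, S (vs i) ⊗ₜ[ℂ] star (gs i)

/-- The coaction `Φ` is star-preserving: whenever `Φ a = Σᵢ aᵢ ⊗ gᵢ` one has
`Φ (a*) = Σᵢ aᵢ* ⊗ star gᵢ`. -/
def IsStarCoact {G : Type} [Ring G] [Bialgebra ℂ G] [StarRing G]
    {A : Type} [Ring A] [Algebra ℂ A] [StarRing A]
    (Φ : A →ₐ[ℂ] A ⊗[ℂ] G) : Prop :=
  ∀ (a : A) (s : Finset ℕ) (as : ℕ → A) (gs : ℕ → G),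
    Φ a = ∑ i ∈ s, as i ⊗ₜ[ℂ] gs i →
    Φ (star a) = ∑ i ∈ s, star (as i) ⊗ₜ[ℂ] star (gs i)

/-- The conjugate-linear map `T* : v ↦ (T v)*`. -/
def starComp {A : Type} [Ring A] [Algebra ℂ A] [StarRing A] [StarModule ℂ A]
    {V : Type} [AddCommGroup V] [Module ℂ V]
    (T : V →ₗ[ℂ] A) : V →ₛₗ[starRingEnd ℂ] A where
  toFun v := star (T v)
  map_add' v w := by simp only [map_add, star_add]
  map_smul' c v := by simp only [map_smul, star_smul, starRingEnd_apply]

/-! Applying `Φ` to `p_k = Σᵢ T(eᵢ) x_{ki}*` produces the coefficients `Σᵢ u_{mi} u_{li}*`, which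
unitarity of `α` collapses to `δ_{ml}`, so `p_k` is coinvariant. On the basis, `Σ_k p_k T^L_k`
agrees with `T` by the orthogonality relations `Σ_k x_{ki}* x_{kj} = δ_{ij}`. -/

theorem IsStarCoact.map_star_of_eq_sum {G A : Type} [Ring G] [Bialgebra ℂ G] [StarRing G]
    [Ring A] [Algebra ℂ A] [StarRing A] {Φ : A →ₐ[ℂ] A ⊗[ℂ] G} (hΦ : IsStarCoact Φ)
    {ι : Type*} [Fintype ι] {a : A} {as : ι → A} {gs : ι → G}
    (h : Φ a = ∑ i, as i ⊗ₜ[ℂ] gs i) :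
    Φ (star a) = ∑ i, star (as i) ⊗ₜ[ℂ] star (gs i) := by
  classical
  -- `IsStarCoact` only speaks of `ℕ`-indexed sums: transport along an embedding `ι ↪ ℕ`.
  let toNat : ι ↪ ℕ := (Fintype.equivFin ι).toEmbedding.trans Fin.valEmbedding
  have key := hΦ a (Finset.univ.map toNat)
    (Function.extend toNat as 0) (Function.extend toNat gs 0)
    (by simpa only [Finset.sum_map, toNat.injective.extend_apply] using h)
  simpa only [Finset.sum_map, toNat.injective.extend_apply] using key

theorem IsMor0.map_apply_eq_sum {G A V : Type} {ι : Type*} [Ring G] [Bialgebra ℂ G] [Ring A] [Algebra ℂ A]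
    [AddCommGroup V] [Module ℂ V] [Fintype ι] {α : V →ₗ[ℂ] V ⊗[ℂ] G} {Φ : A →ₐ[ℂ] A ⊗[ℂ] G}
    {T : V →ₗ[ℂ] A} (hT : IsMor0 α Φ T) {e : ι → V} {u : ι → ι → G}
    (hu : ∀ j, α (e j) = ∑ i, e i ⊗ₜ[ℂ] u i j) (j : ι) :
    Φ (T (e j)) = ∑ i, T (e i) ⊗ₜ[ℂ] u i j := by
  simp only [hT (e j), hu j, map_sum, LinearMap.rTensor_tmul]

theorem AlgHom.map_sum_mul_eq_tmul_one {R A G ι : Type*} [CommSemiring R] [Semiring A]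
    [Algebra R A] [Semiring G] [Algebra R G] [Fintype ι] [DecidableEq ι]
    (Φ : A →ₐ[R] A ⊗[R] G) {a b : ι → A} {u w : ι → ι → G}
    (ha : ∀ j, Φ (a j) = ∑ i, a i ⊗ₜ[R] u i j) (hb : ∀ j, Φ (b j) = ∑ i, b i ⊗ₜ[R] w i j)
    (huw : ∀ i l, ∑ j, u i j * w l j = if i = l then 1 else 0) :
    Φ (∑ j, a j * b j) = (∑ j, a j * b j) ⊗ₜ[R] 1 := by
  calc Φ (∑ j, a j * b j)
      = ∑ j, ∑ i, ∑ l, (a i * b l) ⊗ₜ[R] (u i j * w l j) := by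
        simp only [map_sum, map_mul, ha, hb, Finset.sum_mul_sum,
          Algebra.TensorProduct.tmul_mul_tmul]
    _ = ∑ i, ∑ l, (a i * b l) ⊗ₜ[R] ∑ j, u i j * w l j := by
        rw [Finset.sum_comm]
        simp only [TensorProduct.tmul_sum]
        exact Finset.sum_congr rfl fun i _ => Finset.sum_comm
    _ = (∑ j, a j * b j) ⊗ₜ[R] 1 := by
        simp [huw, TensorProduct.tmul_ite, TensorProduct.sum_tmul]

theorem LinearMap.apply_eq_sum_mul_of_sum_mul_eq_ite {R V A ι κ : Type*} [CommSemiring R]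
    [AddCommMonoid V] [Module R V] [Semiring A] [Algebra R A] [Fintype ι] [DecidableEq ι]
    [Fintype κ] (e : Module.Basis ι R V) (T : V →ₗ[R] A) (TL : κ → V →ₗ[R] A)
    (y : κ → ι → A) (h : ∀ i j, ∑ k, y k i * TL k (e j) = if i = j then 1 else 0) (v : V) :
    T v = ∑ k, (∑ i, T (e i) * y k i) * TL k v := by
  have hT : T = ∑ k, LinearMap.mulLeft R (∑ i, T (e i) * y k i) ∘ₗ TL k := e.ext fun j => by
    simp only [LinearMap.sum_apply, LinearMap.comp_apply, LinearMap.mulLeft_apply,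
      Finset.sum_mul, mul_assoc]
    rw [Finset.sum_comm]
    simp [← Finset.mul_sum, h]
  simpa using LinearMap.congr_fun hT v

theorem statement18_general {G : Type} [Ring G] [HopfAlgebra ℂ G] [StarRing G]
    {A : Type} [Ring A] [Algebra ℂ A] [StarRing A]
    (Φ : A →ₐ[ℂ] A ⊗[ℂ] G) (hΦstar : IsStarCoact Φ)
    {V : Type} [AddCommGroup V] [Module ℂ V] {n : ℕ}
    (α : V →ₗ[ℂ] V ⊗[ℂ] G)
    (e : Module.Basis (Fin n) ℂ V) (u : Fin n → Fin n → G)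
    (hu : ∀ j, α (e j) = ∑ i, e i ⊗ₜ[ℂ] u i j)
    (hunitary : ∀ i j : Fin n, (∑ k, u i k * star (u j k)) = if i = j then (1 : G) else 0)
    {d : ℕ} (TL : Fin d → (V →ₗ[ℂ] A)) (hTL : ∀ k, IsMor0 α Φ (TL k))
    (x : Fin d → Fin n → A) (hx : ∀ k i, x k i = TL k (e i))
    (horth : ∀ i j : Fin n, (∑ k, star (x k i) * x k j) = if i = j then (1 : A) else 0)
    (T : V →ₗ[ℂ] A) (hT : IsMor0 α Φ T) :
    (∀ k : Fin d,
      Φ (∑ i, T (e i) * star (x k i)) = (∑ i, T (e i) * star (x k i)) ⊗ₜ[ℂ] (1 : G)) ∧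
    (∀ v : V, T v = ∑ k, (∑ i, T (e i) * star (x k i)) * TL k v) := by
  obtain rfl : x = fun k i => TL k (e i) := funext fun k => funext (hx k)
  have hstar (k : Fin d) (j : Fin n) :
      Φ (star (TL k (e j))) = ∑ i, star (TL k (e i)) ⊗ₜ[ℂ] star (u i j) :=
    hΦstar.map_star_of_eq_sum ((hTL k).map_apply_eq_sum hu j)
  exact ⟨fun k => Φ.map_sum_mul_eq_tmul_one (hT.map_apply_eq_sum hu) (hstar k) hunitary,
    LinearMap.apply_eq_sum_mul_of_sum_mul_eq_ite e T TL _ horth⟩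

/-- if `α` is a unitary corepresentation with matrix coefficients `u i j`
and there are `T^L_1, …, T^L_d ∈ Mor⁰(α, Φ)` with `Σ_k (x k i)* · (x k j) = δᵢⱼ·1` for
`x k i := T^L_k (e i)`, then every `T ∈ Mor⁰(α, Φ)` satisfies
`T = Σ_k p_k · T^L_k` with `p_k := Σ_i T(e_i)·(x k i)* ∈ ℳ`. -/
theorem statement18 {G : Type} [Ring G] [HopfAlgebra ℂ G] [StarRing G] [StarModule ℂ G]
    (hG : IsStarHopf G)
    {A : Type} [Ring A] [Algebra ℂ A] [StarRing A] [StarModule ℂ A]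
    (Φ : A →ₐ[ℂ] A ⊗[ℂ] G) (hΦ : IsCorep Φ.toLinearMap) (hΦstar : IsStarCoact Φ)
    {V : Type} [AddCommGroup V] [Module ℂ V] {n : ℕ}
    (α : V →ₗ[ℂ] V ⊗[ℂ] G) (hα : IsCorep α)
    (e : Module.Basis (Fin n) ℂ V) (u : Fin n → Fin n → G)
    (hu : ∀ j, α (e j) = ∑ i, e i ⊗ₜ[ℂ] u i j)
    (hunitary : ∀ i j : Fin n, (∑ k, u i k * star (u j k)) = if i = j then (1 : G) else 0)
    {d : ℕ} (TL : Fin d → (V →ₗ[ℂ] A)) (hTL : ∀ k, IsMor0 α Φ (TL k))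
    (x : Fin d → Fin n → A) (hx : ∀ k i, x k i = TL k (e i))
    (horth : ∀ i j : Fin n, (∑ k, star (x k i) * x k j) = if i = j then (1 : A) else 0)
    (T : V →ₗ[ℂ] A) (hT : IsMor0 α Φ T) :
    (∀ k : Fin d,
      Φ (∑ i, T (e i) * star (x k i)) = (∑ i, T (e i) * star (x k i)) ⊗ₜ[ℂ] (1 : G)) ∧
    (∀ v : V, T v = ∑ k, (∑ i, T (e i) * star (x k i)) * TL k v) :=
  statement18_general Φ hΦstar α e u hu hunitary TL hTL x hx horth T hT
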